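/- arXiv:math/0501524 — 6 statements merged into one kernel-verified Lean document; each statement's English description precedes it below -/
import Mathlib

section
/- Let ⟨C_α : α < ω₁⟩ be a C-sequence with associated lower trace L. If α ≤ β ≤ γ < ω₁ and every element of L(β,γ) is less than every element of L(α,β), then L(α,γ) = L(α,β) ∪ L(β,γ). -/
/-- The first uncountable ordinal. -/
noncomputable def omega1 : Ordinal := (Cardinal.aleph 1).ord

/-- **Fact (Moore).** Let `⟨C_α : α < ω₁⟩` be a C-sequence with associated lower
trace `L` (characterized by its defining recursion).  If `α ≤ β ≤ γ < ω₁`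
(with `0 < α`, so that the traces are defined) and every element of `L(β,γ)` is
less than every element of `L(α,β)`, then `L(α,γ) = L(α,β) ∪ L(β,γ)`. -/
theorem statement5
    (C : Ordinal → Set Ordinal)
    -- C-sequence: each `C β` is a cofinal subset of `β` containing `0`,
    -- all of whose proper initial parts are finite:
    (hC : ∀ β : Ordinal, 0 < β → β < omega1 →
      C β ⊆ Set.Iio β ∧ (0 : Ordinal) ∈ C β ∧
      (∀ γ < β, ∃ x ∈ C β, γ ≤ x) ∧ (∀ γ < β, (C β ∩ Set.Iio γ).Finite))
    (L : Ordinal → Ordinal → Set Ordinal)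
    -- the defining recursion of the lower trace: `L(α,α) = ∅` and, for
    -- `0 < α < β`, `L(α,β) = {max (C_β ∩ α)} ∪ {ξ ∈ L(α, min (C_β \ α)) : ξ > max (C_β ∩ α)}`:
    (hL0 : ∀ α : Ordinal, L α α = ∅)
    (hLrec : ∀ α β : Ordinal, 0 < α → α < β → β < omega1 →
      L α β = insert (sSup (C β ∩ Set.Iio α))
        {ξ ∈ L α (sInf (C β \ Set.Iio α)) | sSup (C β ∩ Set.Iio α) < ξ}) :
    ∀ α β γ : Ordinal, 0 < α → α ≤ β → β ≤ γ → γ < omega1 →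
      (∀ x ∈ L β γ, ∀ y ∈ L α β, x < y) →
      L α γ = L α β ∪ L β γ := by
  intro α β γ
  induction γ using Ordinal.induction generalizing α β with
  | h γ IH =>
  intro hα hαβ hβγ hγω hsep
  rcases eq_or_lt_of_le hβγ with rfl | hβγ'
  · rw [hL0, Set.union_empty]
  rcases eq_or_lt_of_le hαβ with rfl | hαβ'
  · rw [hL0, Set.empty_union]
  -- now α < β < γ
  have hβ0 : 0 < β := hα.trans hαβ'
  have hβω : β < omega1 := hβγ'.trans hγω
  have hαγ : α < γ := hαβ'.trans hβγ'
  obtain ⟨hCγsub, hCγ0, hCγcof, hCγfin⟩ := hC γ (hα.trans hαγ) hγω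
  obtain ⟨hCβsub, hCβ0, hCβcof, hCβfin⟩ := hC β hβ0 hβω
  set x := sSup (C γ ∩ Set.Iio β) with hxdef
  have hxmem : x ∈ L β γ := by
    rw [hLrec β γ hβ0 hβγ' hγω]; exact Set.mem_insert _ _
  set y₀ := sSup (C β ∩ Set.Iio α) with hy₀def
  have hy₀mem : y₀ ∈ C β ∩ Set.Iio α :=
    Set.Nonempty.csSup_mem ⟨0, hCβ0, hα⟩ (hCβfin α hαβ')
  have hy₀L : y₀ ∈ L α β := by
    rw [hLrec α β hα hαβ' hβω]; exact Set.mem_insert _ _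
  have hxα : x < α := (hsep x hxmem y₀ hy₀L).trans hy₀mem.2
  -- the initial part of C γ below β is already below α
  have hIio : C γ ∩ Set.Iio β = C γ ∩ Set.Iio α := by
    apply Set.Subset.antisymm
    · intro z hz
      exact ⟨hz.1, lt_of_le_of_lt (le_csSup (hCγfin β hβγ').bddAbove hz) hxα⟩
    · intro z hz
      exact ⟨hz.1, hz.2.trans hαβ'⟩
  have hdiff : C γ \ Set.Iio α = C γ \ Set.Iio β := by
    ext z
    simp only [Set.mem_diff, Set.mem_Iio]
    constructor
    · rintro ⟨hz, hz2⟩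
      refine ⟨hz, fun hzβ => hz2 ?_⟩
      exact ((Set.ext_iff.mp hIio z).mp ⟨hz, hzβ⟩).2
    · rintro ⟨hz, hz2⟩
      exact ⟨hz, fun hzα => hz2 (hzα.trans hαβ')⟩
  -- the first step of the walk from γ towards β (equivalently, towards α)
  obtain ⟨w, hw, hβw⟩ := hCγcof β hβγ'
  set γ₁ := sInf (C γ \ Set.Iio β) with hγ₁def
  have hγ₁mem : γ₁ ∈ C γ \ Set.Iio β := csInf_mem ⟨w, hw, not_lt.mpr hβw⟩
  have hβγ₁ : β ≤ γ₁ := not_lt.mp hγ₁mem.2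
  have hγ₁γ : γ₁ < γ := hCγsub hγ₁mem.1
  -- unfold the recursion for `L α γ` and `L β γ`
  have hLαγ : L α γ = insert x {ξ ∈ L α γ₁ | x < ξ} := by
    rw [hLrec α γ hα hαγ hγω, ← hIio, hdiff]
  have hLβγ : L β γ = insert x {ξ ∈ L β γ₁ | x < ξ} := by
    rw [hLrec β γ hβ0 hβγ' hγω]
  have hxLαβ : ∀ ξ ∈ L α β, x < ξ := fun ξ hξ => hsep x hxmem ξ hξ
  rcases eq_or_lt_of_le hβγ₁ with hβeq | hβγ₁'
  · -- the walk reaches β in one step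
    rw [hLαγ, hLβγ, ← hβeq, hL0]
    ext ξ
    simp only [Set.mem_insert_iff, Set.mem_sep_iff, Set.mem_setOf_eq, Set.mem_union,
      Set.mem_empty_iff_false, false_and, or_false]
    have := hxLαβ ξ
    tauto
  · -- the walk needs more steps: use the inductive hypothesis at γ₁
    have hsep' : ∀ x' ∈ L β γ₁, ∀ y ∈ L α β, x' < y := by
      intro x' hx' y hy
      rcases lt_or_ge x x' with h | h
      · exact hsep x' (by rw [hLβγ]; exact Set.mem_insert_iff.mpr (Or.inr ⟨hx', h⟩)) y hy
      · exact lt_of_le_of_lt h (hxLαβ y hy)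
    have hU : L α γ₁ = L α β ∪ L β γ₁ :=
      IH γ₁ hγ₁γ α β hα hαβ hβγ₁ (hγ₁γ.trans hγω) hsep'
    rw [hLαγ, hLβγ, hU]
    ext ξ
    simp only [Set.mem_insert_iff, Set.mem_sep_iff, Set.mem_setOf_eq, Set.mem_union]
    have := hxLαβ ξ
    tauto
end

section
/- Let ⟨C_α : α < ω₁⟩ be a C-sequence with associated lower trace L. For all ξ, δ with 0 < ξ < δ < ω₁, min L(ξ,δ) = max(C_δ ∩ ξ). Consequently, for every limit ordinal δ < ω₁, min L(ξ,δ) tends to δ as ξ tends to δ: for every γ < δ there is γ̄ < δ such that γ < min L(ξ,δ) whenever γ̄ < ξ < δ. -/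
theorem isLeast_insert_sep_lt {α : Type*} [Preorder α] (a : α) (s : Set α) :
    IsLeast (insert a {x ∈ s | a < x}) a :=
  ⟨Set.mem_insert a _, by rintro x (rfl | ⟨-, hx⟩); exacts [le_rfl, hx.le]⟩

theorem csInf_insert_sep_lt {α : Type*} [ConditionallyCompleteLattice α] (a : α) (s : Set α) :
    sInf (insert a {x ∈ s | a < x}) = a :=
  (isLeast_insert_sep_lt a s).csInf_eq

theorem Order.IsSuccLimit.exists_forall_lt_csSup_inter_Iio {α : Type*}
    [ConditionallyCompleteLinearOrder α] {c : Set α} {δ : α} (hδ : Order.IsSuccLimit δ)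
    (hsub : c ⊆ Set.Iio δ) (hcof : ∀ γ < δ, ∃ x ∈ c, γ ≤ x) {γ : α} (hγ : γ < δ) :
    ∃ γbar < δ, ∀ ξ, γbar < ξ → γ < sSup (c ∩ Set.Iio ξ) := by
  obtain ⟨γ', hγ'δ, hγγ'⟩ := hδ.lt_iff_exists_lt.mp hγ
  obtain ⟨x, hx, hγ'x⟩ := hcof γ' hγ'δ
  have hbdd : BddAbove c := ⟨δ, fun y hy => (hsub hy).le⟩
  refine ⟨x, hsub hx, fun ξ hxξ => ?_⟩
  calc γ < γ' := hγγ'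
    _ ≤ x := hγ'x
    _ ≤ sSup (c ∩ Set.Iio ξ) := le_csSup (hbdd.mono Set.inter_subset_left) ⟨hx, hxξ⟩

theorem statement6_general
    (C : Ordinal → Set Ordinal)
    (hC : ∀ β : Ordinal, 0 < β → β < omega1 →
      C β ⊆ Set.Iio β ∧ (0 : Ordinal) ∈ C β ∧
      (∀ γ < β, ∃ x ∈ C β, γ ≤ x) ∧ (∀ γ < β, (C β ∩ Set.Iio γ).Finite))
    (L : Ordinal → Ordinal → Set Ordinal)
    (hLrec : ∀ α β : Ordinal, 0 < α → α < β → β < omega1 →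
      L α β = insert (sSup (C β ∩ Set.Iio α))
        {ξ ∈ L α (sInf (C β \ Set.Iio α)) | sSup (C β ∩ Set.Iio α) < ξ}) :
    (∀ ξ δ : Ordinal, 0 < ξ → ξ < δ → δ < omega1 →
        sInf (L ξ δ) = sSup (C δ ∩ Set.Iio ξ)) ∧
    (∀ δ < omega1, Order.IsSuccLimit δ → ∀ γ < δ, ∃ γbar < δ,
        ∀ ξ : Ordinal, γbar < ξ → ξ < δ → γ < sInf (L ξ δ)) := by
  have hmin : ∀ ξ δ : Ordinal, 0 < ξ → ξ < δ → δ < omega1 →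
      sInf (L ξ δ) = sSup (C δ ∩ Set.Iio ξ) := fun ξ δ hξ hξδ hδ => by
    rw [hLrec ξ δ hξ hξδ hδ, csInf_insert_sep_lt]
  refine ⟨hmin, fun δ hδ hlim γ hγ => ?_⟩
  obtain ⟨hsub, -, hcof, -⟩ := hC δ hlim.pos hδ
  obtain ⟨γbar, hγbarδ, hlt⟩ := hlim.exists_forall_lt_csSup_inter_Iio hsub hcof hγ
  refine ⟨γbar, hγbarδ, fun ξ hγbarξ hξδ => ?_⟩
  rw [hmin ξ δ (bot_le.trans_lt hγbarξ) hξδ hδ]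
  exact hlt ξ hγbarξ

/-- **Fact (Moore).** Let `⟨C_α : α < ω₁⟩` be a C-sequence with associated lower
trace `L`.  For all `0 < ξ < δ < ω₁` we have `min L(ξ,δ) = max (C_δ ∩ ξ)`.
Consequently, for every limit ordinal `δ < ω₁`, `min L(ξ,δ)` tends to `δ` as
`ξ → δ`. -/
theorem statement6
    (C : Ordinal → Set Ordinal)
    (hC : ∀ β : Ordinal, 0 < β → β < omega1 →
      C β ⊆ Set.Iio β ∧ (0 : Ordinal) ∈ C β ∧
      (∀ γ < β, ∃ x ∈ C β, γ ≤ x) ∧ (∀ γ < β, (C β ∩ Set.Iio γ).Finite))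
    (L : Ordinal → Ordinal → Set Ordinal)
    (hL0 : ∀ α : Ordinal, L α α = ∅)
    (hLrec : ∀ α β : Ordinal, 0 < α → α < β → β < omega1 →
      L α β = insert (sSup (C β ∩ Set.Iio α))
        {ξ ∈ L α (sInf (C β \ Set.Iio α)) | sSup (C β ∩ Set.Iio α) < ξ}) :
    (∀ ξ δ : Ordinal, 0 < ξ → ξ < δ → δ < omega1 →
        sInf (L ξ δ) = sSup (C δ ∩ Set.Iio ξ)) ∧
    (∀ δ < omega1, Order.IsSuccLimit δ → ∀ γ < δ, ∃ γbar < δ,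
        ∀ ξ : Ordinal, γbar < ξ → ξ < δ → γ < sInf (L ξ δ)) :=
  statement6_general C hC L hLrec
end

section
/- Let ⟨C_α : α < ω₁⟩ be a C-sequence, and for α ≤ β define e_β(α) = ρ₁(α,β). Then ⟨e_β : β < ω₁⟩ is a coherent sequence of finite-to-one functions: each e_β : β → ω is finite-to-one, and for all β ≤ β' < ω₁ the set {ξ < β : e_β(ξ) ≠ e_{β'}(ξ)} is finite. -/
/-!
The recursion reads `ρ(ξ, β) = max (|C_β ∩ c|, ρ(ξ, c))`, where `c` is the least element of `C_β`
that is `≥ ξ`. As `C_β` has finite initial segments, only finitely many `c ∈ C_β` satisfy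
`|C_β ∩ c| ≤ n`, so induction on `β` shows that `{ξ < β | ρ(ξ, β) ≤ n}` is finite.
For coherence of `β < β'`, let `ν` be the least element of `C_β'` that is `≥ β`. Every `ξ < β`
steps from `β'` to some `c` in the finite set `C_β' ∩ [0, ν]`, and `ρ(ξ, β') ≠ ρ(ξ, β)` forces
either `ρ(ξ, c) ≤ |C_β' ∩ c|` (finitely many `ξ` by finite-to-oneness) or `ρ(ξ, c) ≠ ρ(ξ, β)`
(finitely many `ξ` by induction, as `c` and `β` both lie below `β'`).
-/

open Set

section LinearOrder

variable {α : Type*} [LinearOrder α] {S : Set α}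

theorem strictMonoOn_ncard_inter_Iio (hS : ∀ x ∈ S, (S ∩ Iio x).Finite) :
    StrictMonoOn (fun c => (S ∩ Iio c).ncard) S := by
  intro a ha b hb hab
  refine ncard_lt_ncard ?_ (hS b hb)
  exact (ssubset_iff_of_subset (inter_subset_inter_right _ (Iio_subset_Iio hab.le))).2
    ⟨a, ⟨ha, hab⟩, fun h => lt_irrefl a h.2⟩

theorem finite_setOf_ncard_inter_Iio_le (hS : ∀ x ∈ S, (S ∩ Iio x).Finite) (n : ℕ) :
    {c ∈ S | (S ∩ Iio c).ncard ≤ n}.Finite :=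
  (finite_Iic n).of_injOn (fun _ hc => hc.2)
    ((strictMonoOn_ncard_inter_Iio hS).injOn.mono (sep_subset _ _))

theorem inter_Iio_eq_of_isLeast_diff_Iio {ξ c : α} (h : IsLeast (S \ Iio ξ) c) :
    S ∩ Iio c = S ∩ Iio ξ := by
  ext x
  constructor
  · rintro ⟨hx, hxc⟩
    exact ⟨hx, not_le.1 fun hξx => (h.2 ⟨hx, not_lt.2 hξx⟩).not_gt hxc⟩
  · rintro ⟨hx, hxξ⟩
    exact ⟨hx, hxξ.trans_le (not_lt.1 h.1.2)⟩

end LinearOrder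

section MaximalWeight

variable {α : Type*} [ConditionallyCompleteLinearOrder α] [WellFoundedLT α]
  {C : α → Set α} {κ : α} {ρ : α → α → ℕ}
  (hC : ∀ β < κ, ∀ γ < β, C β ⊆ Iio β ∧ (∃ x ∈ C β, γ ≤ x) ∧ (C β ∩ Iio γ).Finite)
  (hρ : ∀ ξ β, ξ < β → β < κ → ρ ξ β = max (C β ∩ Iio ξ).ncard (ρ ξ (sInf (C β \ Iio ξ))))
include hC hρ

theorem exists_isLeast_rho_eq_max {ξ δ : α} (hξ : ξ < δ) (hδ : δ < κ) :
    ∃ c, IsLeast (C δ \ Iio ξ) c ∧ ρ ξ δ = max (C δ ∩ Iio c).ncard (ρ ξ c) := by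
  obtain ⟨-, ⟨x, hx, hξx⟩, -⟩ := hC δ hδ ξ hξ
  have hc := isLeast_csInf (s := C δ \ Iio ξ) ⟨x, hx, not_lt.2 hξx⟩
  exact ⟨_, hc, by rw [inter_Iio_eq_of_isLeast_diff_Iio hc, hρ ξ δ hξ hδ]⟩

theorem finite_setOf_rho_le (n : ℕ) {β : α} (hβ : β < κ) :
    {ξ | ξ < β ∧ ρ ξ β ≤ n}.Finite := by
  induction β using WellFoundedLT.induction with
  | _ β ih =>
  by_cases hmin : IsMin β
  · exact finite_empty.subset fun ξ hξ => hmin.not_lt hξ.1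
  obtain ⟨γ, hγ⟩ := not_isMin_iff.1 hmin
  have hsub := (hC β hβ γ hγ).1
  set F := {c ∈ C β | (C β ∩ Iio c).ncard ≤ n}
  have hF : F.Finite :=
    finite_setOf_ncard_inter_Iio_le (fun c hc => (hC β hβ c (hsub hc)).2.2) n
  refine (hF.union (hF.biUnion fun c hc => ih c (hsub hc.1) ((hsub hc.1).trans hβ))).subset ?_
  rintro ξ ⟨hξβ, hle⟩
  obtain ⟨c, hc, hrec⟩ := exists_isLeast_rho_eq_max hC hρ hξβ hβ
  rw [hrec, max_le_iff] at hle
  have hcF : c ∈ F := ⟨hc.1.1, hle.1⟩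
  rcases (not_lt.1 hc.1.2).eq_or_lt with rfl | hξc
  · exact Or.inl hcF
  · exact Or.inr (mem_biUnion hcF ⟨hξc, hle.2⟩)

theorem finite_setOf_rho_ne {β β' : α} (hββ' : β ≤ β') (hβ' : β' < κ) :
    {ξ | ξ < β ∧ ρ ξ β ≠ ρ ξ β'}.Finite := by
  induction β' using WellFoundedLT.induction generalizing β with
  | _ β' ih =>
  have ih_symm : ∀ a < β', ∀ b < β', {ξ | ξ < a ∧ ξ < b ∧ ρ ξ a ≠ ρ ξ b}.Finite := by
    intro a ha b hb
    rcases le_total a b with hab | hba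
    · exact (ih b hb hab (hb.trans hβ')).subset fun ξ h => ⟨h.1, h.2.2⟩
    · exact (ih a ha hba (ha.trans hβ')).subset fun ξ h => ⟨h.2.1, h.2.2.symm⟩
  rcases hββ'.eq_or_lt with rfl | hlt
  · simp
  obtain ⟨hsub, ⟨x, hx, hβx⟩, hfin⟩ := hC β' hβ' β hlt
  have hν := isLeast_csInf (s := C β' \ Iio β) ⟨x, hx, not_lt.2 hβx⟩
  set ν := sInf (C β' \ Iio β)
  set G := C β' ∩ Iic ν
  have hG : G.Finite := by
    refine ((inter_Iio_eq_of_isLeast_diff_Iio hν ▸ hfin).insert ν).subset ?_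
    rintro y ⟨hy, hyν⟩
    rcases hyν.eq_or_lt with rfl | h
    · exact mem_insert _ _
    · exact mem_insert_of_mem ν ⟨hy, h⟩
  refine (hG.union (hG.biUnion fun c hc =>
    (finite_setOf_rho_le hC hρ (C β' ∩ Iio c).ncard ((hsub hc.1).trans hβ')).union
      (ih_symm c (hsub hc.1) β hlt))).subset ?_
  rintro ξ ⟨hξβ, hne⟩
  obtain ⟨c, hc, hrec⟩ := exists_isLeast_rho_eq_max hC hρ (hξβ.trans hlt) hβ'
  have hcG : c ∈ G := ⟨hc.1.1, hc.2 ⟨hν.1.1, not_lt.2 (hξβ.le.trans (not_lt.1 hν.1.2))⟩⟩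
  rcases (not_lt.1 hc.1.2).eq_or_lt with rfl | hξc
  · exact Or.inl hcG
  refine Or.inr (mem_biUnion hcG ?_)
  by_cases hk : ρ ξ c ≤ (C β' ∩ Iio c).ncard
  · exact Or.inl ⟨hξc, hk⟩
  · rw [hrec, max_eq_right (not_le.1 hk).le] at hne
    exact Or.inr ⟨hξc, hξβ, hne.symm⟩

end MaximalWeight

theorem statement7_general
    (C : Ordinal → Set Ordinal)
    (hC : ∀ β : Ordinal, 0 < β → β < omega1 →
      C β ⊆ Set.Iio β ∧ (0 : Ordinal) ∈ C β ∧
      (∀ γ < β, ∃ x ∈ C β, γ ≤ x) ∧ (∀ γ < β, (C β ∩ Set.Iio γ).Finite))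
    (ρ : Ordinal → Ordinal → ℕ)
    -- the defining recursion of the maximal weight: `ρ₁(α,α) = 0` and, for `α < β`,
    -- `ρ₁(α,β) = max (|C_β ∩ α|, ρ₁(α, min (C_β \ α)))`:
    (hρrec : ∀ α β : Ordinal, α < β → β < omega1 →
      ρ α β = max (C β ∩ Set.Iio α).ncard (ρ α (sInf (C β \ Set.Iio α)))) :
    (∀ β < omega1, ∀ n : ℕ, {ξ | ξ < β ∧ ρ ξ β = n}.Finite) ∧
    (∀ β β' : Ordinal, β ≤ β' → β' < omega1 →
      {ξ | ξ < β ∧ ρ ξ β ≠ ρ ξ β'}.Finite) := by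
  have hC' : ∀ β < omega1, ∀ γ < β,
      C β ⊆ Iio β ∧ (∃ x ∈ C β, γ ≤ x) ∧ (C β ∩ Iio γ).Finite := by
    intro β hβ γ hγ
    obtain ⟨hsub, -, hcof, hfin⟩ := hC β (zero_le.trans_lt hγ) hβ
    exact ⟨hsub, hcof γ hγ, hfin γ hγ⟩
  exact ⟨fun β hβ n => (finite_setOf_rho_le hC' hρrec n hβ).subset fun ξ h => ⟨h.1, h.2.le⟩,
    fun β β' hββ' hβ' => finite_setOf_rho_ne hC' hρrec hββ' hβ'⟩

/-- **Fact (Todorcevic).** Let `⟨C_α : α < ω₁⟩` be a C-sequence, let `ρ₁` be the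
associated maximal weight function (characterized by its defining recursion), and
set `e_β(α) = ρ₁(α,β)`.  Then `⟨e_β : β < ω₁⟩` is a coherent sequence of
finite-to-one functions: each `e_β : β → ω` is finite-to-one, and for all
`β ≤ β' < ω₁` the set `{ξ < β : e_β(ξ) ≠ e_{β'}(ξ)}` is finite. -/
theorem statement7
    (C : Ordinal → Set Ordinal)
    (hC : ∀ β : Ordinal, 0 < β → β < omega1 →
      C β ⊆ Set.Iio β ∧ (0 : Ordinal) ∈ C β ∧
      (∀ γ < β, ∃ x ∈ C β, γ ≤ x) ∧ (∀ γ < β, (C β ∩ Set.Iio γ).Finite))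
    (ρ : Ordinal → Ordinal → ℕ)
    -- the defining recursion of the maximal weight: `ρ₁(α,α) = 0` and, for `α < β`,
    -- `ρ₁(α,β) = max (|C_β ∩ α|, ρ₁(α, min (C_β \ α)))`:
    (hρ0 : ∀ α : Ordinal, ρ α α = 0)
    (hρrec : ∀ α β : Ordinal, α < β → β < omega1 →
      ρ α β = max (C β ∩ Set.Iio α).ncard (ρ α (sInf (C β \ Set.Iio α)))) :
    (∀ β < omega1, ∀ n : ℕ, {ξ | ξ < β ∧ ρ ξ β = n}.Finite) ∧
    (∀ β β' : Ordinal, β ≤ β' → β' < omega1 →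
      {ξ | ξ < β ∧ ρ ξ β ≠ ρ ξ β'}.Finite) :=
  statement7_general C hC ρ hρrec
end

section
/- Suppose c : [ω₁]² → 2 realizes all patterns, and let R be the binary relation with domain and range ω₁ defined by α R β iff α = β, or α < β and c(α,β) = 1. Then [ω₁]^{<ℵ₀} is not Tukey reducible to R. -/
/-- The coloring `c : [ω₁]² → 2` realizes all patterns: for all positive `k, l`,
all uncountable pairwise disjoint families `𝒜 ⊆ [ω₁]^k`, `ℬ ⊆ [ω₁]^l` and all
`χ : k → 2`, `π : k → l` there are `a ∈ 𝒜`, `b ∈ ℬ` with `max a < min b` and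
`c(a(i), b(π(i))) = χ(i)` for all `i < k`.  (Sets in `[ω₁]^k` are coded by their
increasing enumerations.) -/
def RealizesAllPatterns (c : Ordinal → Ordinal → Fin 2) : Prop :=
  ∀ (k l : ℕ), 0 < k → 0 < l →
    ∀ (A : Set (Fin k → Ordinal)) (B : Set (Fin l → Ordinal)),
      (∀ a ∈ A, StrictMono a ∧ ∀ i, a i < omega1) →
      (∀ b ∈ B, StrictMono b ∧ ∀ j, b j < omega1) →
      (∀ a ∈ A, ∀ a' ∈ A, a ≠ a' → ∀ i i', a i ≠ a' i') →
      (∀ b ∈ B, ∀ b' ∈ B, b ≠ b' → ∀ j j', b j ≠ b' j') →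
      ¬ A.Countable → ¬ B.Countable →
      ∀ (χ : Fin k → Fin 2) (π : Fin k → Fin l),
        ∃ a ∈ A, ∃ b ∈ B, (∀ (i : Fin k) (j : Fin l), a i < b j) ∧
          ∀ i : Fin k, c (a i) (b (π i)) = χ i

/-- The relation `R` on `ω₁`: `α R β` iff `α = β`, or `α < β` and `c(α,β) = 1`. -/
def Rrel (c : Ordinal → Ordinal → Fin 2) (α β : Ordinal) : Prop :=
  α = β ∨ (α < β ∧ c α β = 1)

open Cardinal in
theorem omega1_mk.{w} : #{o : Ordinal.{w} // o < omega1.{w}} = Cardinal.aleph 1 := by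
  have h := Ordinal.mk_Iio_ordinal omega1.{w}
  rw [show omega1.{w}.card = Cardinal.aleph 1 from Cardinal.card_ord _,
    Cardinal.lift_aleph, Ordinal.lift_one] at h
  exact h

theorem omega1_unc.{w} (U : Set {o : Ordinal.{w} // o < omega1.{w}})
    (hU : U = Set.univ) : ¬ U.Countable := by
  subst hU
  rw [Cardinal.countable_iff_lt_aleph_one, Cardinal.mk_univ, omega1_mk]
  exact lt_irrefl _

open Cardinal in
theorem statement13_aux.{u, v}
    (c : Ordinal.{u} → Ordinal.{u} → Fin 2) (hc : RealizesAllPatterns c)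
    (f : Finset {o : Ordinal.{v} // o < omega1.{v}} → {o : Ordinal.{u} // o < omega1.{u}})
    (g : {o : Ordinal.{u} // o < omega1.{u}} → Finset {o : Ordinal.{v} // o < omega1.{v}})
    (hfg : ∀ (x : Finset {o : Ordinal.{v} // o < omega1.{v}})
        (y : {o : Ordinal.{u} // o < omega1.{u}}),
        Rrel c (f x).val y.val → x ⊆ g y) : False := by
  -- cardinality of the ground type
  -- the map α ↦ f {α}
  set F : {o : Ordinal.{v} // o < omega1.{v}} → {o : Ordinal.{u} // o < omega1.{u}} :=
    fun α => f {α} with hF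
  -- every fiber of F is finite
  have hfib : ∀ v, {α | F α = v}.Finite := by
    intro v
    refine (g v).finite_toSet.subset ?_
    intro α hα
    have hr : Rrel c (f {α}).val v.val := Or.inl (congrArg Subtype.val hα)
    exact Finset.mem_coe.mpr (hfg {α} v hr (Finset.mem_singleton_self α))
  -- the range of F is uncountable
  have hrange : ¬ (Set.range F).Countable := by
    intro hcnt
    have hcov : (⋃ v ∈ Set.range F, {α | F α = v})
        = (Set.univ : Set {o : Ordinal.{v} // o < omega1.{v}}) := by
      ext α
      simp only [Set.mem_univ, Set.mem_iUnion, Set.mem_setOf_eq, iff_true]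
      exact ⟨F α, ⟨α, rfl⟩, rfl⟩
    exact omega1_unc _ hcov (hcnt.biUnion fun v _ => (hfib v).countable)
  -- pigeonhole: some value of |g y| occurs uncountably often
  have hN : ∃ N : ℕ, ¬ {y : {o : Ordinal.{u} // o < omega1} | (g y).card = N}.Countable := by
    by_contra h
    push_neg at h
    have hcov : (⋃ N : ℕ, {y | (g y).card = N})
        = (Set.univ : Set {o : Ordinal.{u} // o < omega1}) := by
      ext y; simp
    exact omega1_unc _ hcov (Set.countable_iUnion h)
  obtain ⟨N, hY⟩ := hN
  set k := N + 1 with hk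
  -- an embedding of S × Fin k into the range of F
  have h1 : Cardinal.aleph 1 ≤ #↥(Set.range F) := by
    rw [← not_lt, ← Cardinal.countable_iff_lt_aleph_one]
    exact hrange
  have hle : #({o : Ordinal.{u} // o < omega1} × Fin k) ≤ #↥(Set.range F) := by
    have h2 : #({o : Ordinal.{u} // o < omega1} × Fin k) = Cardinal.aleph 1 * (k : Cardinal) := by
      rw [Cardinal.mk_prod]
      simp only [Cardinal.mk_fin, Cardinal.lift_natCast, Cardinal.lift_id,
        Cardinal.lift_uzero, omega1_mk]
    rw [h2, Cardinal.mul_eq_left Cardinal.aleph0_lt_aleph_one.le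
      ((Cardinal.nat_lt_aleph0 k).le.trans Cardinal.aleph0_lt_aleph_one.le)
      (Nat.cast_ne_zero.mpr (Nat.succ_ne_zero N))]
    exact h1
  obtain ⟨u⟩ := (Cardinal.le_def _ _).mp hle
  -- the family of k-element sets
  set w : {o : Ordinal.{u} // o < omega1} → Fin k → Ordinal :=
    fun β i => ((u (β, i)).val : {o : Ordinal.{u} // o < omega1}).val with hw
  have hwinj : ∀ β β' i i', w β i = w β' i' → (β, i) = (β', i') := by
    intro β β' i i' h
    exact u.injective (Subtype.ext (Subtype.ext h))
  have hwlt : ∀ β i, w β i < omega1 := fun β i => ((u (β, i)).val).property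
  have hwF : ∀ β i, ∃ α, (f {α}).val = w β i := by
    intro β i
    obtain ⟨α, hα⟩ := (u (β, i)).property
    exact ⟨α, congrArg Subtype.val hα⟩
  set s : {o : Ordinal.{u} // o < omega1} → Finset Ordinal :=
    fun β => Finset.image (w β) Finset.univ with hs
  have hscard : ∀ β, (s β).card = k := by
    intro β
    rw [hs]
    rw [Finset.card_image_of_injective _ (fun i i' h => by
      have := hwinj β β i i' h; exact (Prod.ext_iff.mp this).2)]
    simp
  set a : {o : Ordinal.{u} // o < omega1} → Fin k → Ordinal :=
    fun β i => (((s β).orderIsoOfFin (hscard β)) i : Ordinal) with ha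
  have hamem : ∀ β i, a β i ∈ s β := fun β i => (((s β).orderIsoOfFin (hscard β)) i).property
  have hsmem : ∀ β x, x ∈ s β → ∃ i, w β i = x := by
    intro β x hx
    rw [hs] at hx
    simpa using Finset.mem_image.mp hx
  have hsdisj : ∀ β β', β ≠ β' → ∀ x, x ∈ s β → x ∉ s β' := by
    intro β β' hne x hx hx'
    obtain ⟨i, hi⟩ := hsmem β x hx
    obtain ⟨i', hi'⟩ := hsmem β' x hx'
    exact hne (congrArg Prod.fst (hwinj β β' i i' (hi.trans hi'.symm)))
  have hamono : ∀ β, StrictMono (a β) := by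
    intro β i j hij
    exact Subtype.coe_lt_coe.mpr (((s β).orderIsoOfFin (hscard β)).strictMono hij)
  have halt : ∀ β i, a β i < omega1 := by
    intro β i
    obtain ⟨j, hj⟩ := hsmem β _ (hamem β i)
    rw [← hj]; exact hwlt β j
  have hainj : Function.Injective a := by
    intro β β' h
    by_contra hne
    exact hsdisj β β' hne (a β ⟨0, Nat.succ_pos N⟩) (hamem β _)
      (h ▸ hamem β' ⟨0, Nat.succ_pos N⟩)
  have hAunc : ¬ (Set.range a).Countable := by
    intro hcnt
    rw [Cardinal.countable_iff_lt_aleph_one, Cardinal.mk_range_eq _ hainj, omega1_mk] at hcnt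
    exact lt_irrefl _ hcnt
  -- the family of singletons from Y
  set b : {o : Ordinal.{u} // o < omega1} → Fin 1 → Ordinal := fun y _ => y.val with hb
  have hbinj : Function.Injective b := fun y y' h => Subtype.ext (congrFun h 0)
  set Y : Set {o : Ordinal.{u} // o < omega1} := {y | (g y).card = N} with hYdef
  have hBunc : ¬ (b '' Y).Countable := by
    intro hcnt
    exact hY ((hcnt.preimage hbinj).mono (Set.subset_preimage_image b Y))
  -- apply the pattern realization
  obtain ⟨aa, ⟨β, rfl⟩, bb, ⟨y, hyY, rfl⟩, hlt, hcol⟩ :=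
    hc k 1 (Nat.succ_pos N) Nat.one_pos (Set.range a) (b '' Y)
      (by rintro _ ⟨β, rfl⟩; exact ⟨hamono β, halt β⟩)
      (by
        rintro _ ⟨y, _, rfl⟩
        refine ⟨fun i j hij => ?_, fun _ => y.property⟩
        rw [Subsingleton.elim i j] at hij
        exact absurd hij (lt_irrefl _))
      (by
        rintro _ ⟨β, rfl⟩ _ ⟨β', rfl⟩ hne i i' h
        have hβ : β ≠ β' := fun hb => hne (by rw [hb])
        obtain ⟨j, hj⟩ := hsmem β _ (hamem β i)
        obtain ⟨j', hj'⟩ := hsmem β' _ (hamem β' i')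
        exact hsdisj β β' hβ _ (hamem β i) (h ▸ hamem β' i'))
      (by
        rintro _ ⟨y, _, rfl⟩ _ ⟨y', _, rfl⟩ hne j j' h
        have hyy : y = y' := Subtype.ext h
        exact hne (by rw [hyy]))
      hAunc hBunc (fun _ => 1) (fun _ => 0)
  -- extract k distinct elements of g y
  have halpha : ∀ i : Fin k, ∃ α, α ∈ g y ∧ (f {α}).val = a β i := by
    intro i
    obtain ⟨j, hj⟩ := hsmem β _ (hamem β i)
    obtain ⟨α, hα⟩ := hwF β j
    have hval : (f {α}).val = a β i := by rw [hα, hj]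
    have hr : Rrel c (f {α}).val y.val := by
      rw [hval]
      exact Or.inr ⟨hlt i 0, hcol i⟩
    exact ⟨α, hfg {α} y hr (Finset.mem_singleton_self α), hval⟩
  choose α hαmem hαval using halpha
  have hαinj : Function.Injective α := by
    intro i i' h
    apply (hamono β).injective
    rw [← hαval, ← hαval, h]
  have hsub : Finset.image α Finset.univ ⊆ g y := by
    intro x hx
    obtain ⟨i, _, rfl⟩ := Finset.mem_image.mp hx
    exact hαmem i
  have hcard : k ≤ (g y).card := by
    calc k = (Finset.image α Finset.univ).card := by
          rw [Finset.card_image_of_injective _ hαinj]; simp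
      _ ≤ (g y).card := Finset.card_le_card hsub
  have : (g y).card = N := hyY
  omega

/-- **Theorem (Moore).** If `c` realizes all patterns, then `[ω₁]^{<ℵ₀}` (finite
subsets of `ω₁` under inclusion) is not Tukey reducible to the relation `R`. -/
theorem statement13 (c : Ordinal → Ordinal → Fin 2) (hc : RealizesAllPatterns c) :
    ¬ ∃ (f : Finset {o : Ordinal // o < omega1} → {o : Ordinal // o < omega1})
        (g : {o : Ordinal // o < omega1} → Finset {o : Ordinal // o < omega1}),
        ∀ (x : Finset {o : Ordinal // o < omega1}) (y : {o : Ordinal // o < omega1}),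
          Rrel c (f x).val y.val → x ⊆ g y := by
  rintro ⟨f, g, hfg⟩
  exact statement13_aux c hc f g hfg
end

section
/- Suppose c : [ω₁]² → 2 realizes all patterns, let R be the binary relation with domain and range ω₁ defined by α R β iff α = β, or α < β and c(α,β) = 1, and for X ⊆ ω₁ let R_X be the restriction of R with domain X and range ω₁. Then for every nonempty finite family F of pairwise disjoint uncountable subsets of ω₁, the meet ⋀_{X ∈ F} R_X is not Tukey reducible to ℵ₀·ω₁. -/
open Set

universe u v

section Omega1

theorem countable_Iio_iff_lt_omega1 {γ : Ordinal.{u}} : (Iio γ).Countable ↔ γ < omega1 := by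
  rw [← Cardinal.le_aleph0_iff_set_countable, Cardinal.mk_Iio_ordinal, Cardinal.lift_le_aleph0,
    omega1, Cardinal.lt_ord, Cardinal.lt_aleph_one_iff]

theorem countable_Iic_of_lt_omega1 {γ : Ordinal} (hγ : γ < omega1) : (Iic γ).Countable := by
  rw [← Iio_insert]
  exact (countable_Iio_iff_lt_omega1.2 hγ).insert γ

theorem not_countable_univ_Iio_omega1 : ¬(univ : Set (Iio omega1.{u})).Countable := fun h =>
  lt_irrefl _ (countable_Iio_iff_lt_omega1.1 (countable_coe_iff.1 (countable_univ_iff.1 h)))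

theorem countable_setOf_val_le {e : Ordinal} (he : e < omega1) :
    {γ : Iio omega1 | γ.1 ≤ e}.Countable :=
  MapsTo.countable_of_injOn (f := Subtype.val) (t := Iic e) (fun _ h => h)
    Subtype.val_injective.injOn (countable_Iic_of_lt_omega1 he)

theorem not_countable_sep_forall_lt {κ : Type*} [Countable κ] {S : Set (Iio omega1)}
    (hS : ¬S.Countable) {e : κ → Ordinal} (he : ∀ i, e i < omega1) :
    ¬{γ ∈ S | ∀ i, e i < γ.1}.Countable := by
  intro h
  refine hS ((h.union (countable_iUnion fun i => countable_setOf_val_le (he i))).mono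
    fun γ hγ => ?_)
  by_cases hlt : ∀ i, e i < γ.1
  · exact Or.inl ⟨hγ, hlt⟩
  · obtain ⟨i, hi⟩ := not_forall.1 hlt
    exact Or.inr (mem_iUnion.2 ⟨i, not_lt.1 hi⟩)

theorem exists_mem_gt_of_not_countable {X : Set Ordinal} (hX : ¬X.Countable) {γ : Ordinal}
    (hγ : γ < omega1) : ∃ x ∈ X, γ < x := by
  by_contra! h
  exact hX ((countable_Iic_of_lt_omega1 hγ).mono h)

theorem isSuccLimit_omega1 : Order.IsSuccLimit omega1 :=
  Cardinal.isSuccLimit_ord (Cardinal.aleph0_le_aleph 1)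

theorem lift_omega1 : Ordinal.lift.{v} omega1.{u} = omega1.{max u v} := by
  rw [omega1, omega1, Cardinal.lift_ord, Cardinal.lift_aleph, Ordinal.lift_one]

noncomputable def omega1OrderIso : Iio omega1.{u} ≃o Iio omega1.{v} :=
  OrderIso.ofRelIsoLT (Ordinal.lift_type_eq.{u + 1, v + 1, 0}.1 (by
    rw [Ordinal.type_lt_Iio, Ordinal.type_lt_Iio]
    simp only [lift_omega1])).some

end Omega1

section Uncountable

variable {ι κ α : Type*}

theorem Set.nonempty_of_not_countable {S : Set ι} (hS : ¬S.Countable) : S.Nonempty :=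
  nonempty_iff_ne_empty.2 fun h => hS (h ▸ countable_empty)

theorem exists_not_countable_fiber [Countable κ] {S : Set ι} (hS : ¬S.Countable) (F : ι → κ) :
    ∃ m, ¬{x ∈ S | F x = m}.Countable := by
  by_contra! h
  exact hS ((countable_iUnion h).mono fun x hx => by simp [hx])

theorem Set.PairwiseDisjoint.apply_ne_apply {A : Set ι} {a : ι → κ → α}
    (h : A.PairwiseDisjoint fun x => Set.range (a x)) {x x' : ι} (hx : x ∈ A) (hx' : x' ∈ A)
    (hne : x ≠ x') (i i' : κ) : a x i ≠ a x' i' := fun he =>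
  disjoint_left.1 (h hx hx' hne) ⟨i, rfl⟩ ⟨i', he.symm⟩

theorem Set.PairwiseDisjoint.not_countable_image [Nonempty κ] {A : Set ι} {a : ι → κ → α}
    (h : A.PairwiseDisjoint fun x => Set.range (a x)) (hA : ¬A.Countable) :
    ¬(a '' A).Countable := fun hc =>
  hA <| (mapsTo_image a A).countable_of_injOn (fun _ hx _ hx' he => by_contra fun hne =>
    h.apply_ne_apply hx hx' hne (Classical.arbitrary κ) _ (congrFun he _)) hc

theorem exists_not_countable_pairwiseDisjoint {S : Set ι} (hS : ¬S.Countable) (v : ι → Set α)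
    (hv : ∀ x ∈ S, (v x).Countable)
    (hmult : ∀ x ∈ S, ∀ e ∈ v x, {y ∈ S | e ∈ v y}.Countable) :
    ∃ T ⊆ S, ¬T.Countable ∧ T.PairwiseDisjoint v := by
  obtain ⟨M, hM⟩ := zorn_subset {M | M ⊆ S ∧ M.PairwiseDisjoint v} fun C hCS hC =>
    ⟨⋃₀ C, ⟨sUnion_subset fun M hM => (hCS hM).1,
      (pairwiseDisjoint_sUnion hC.directedOn).2 fun M hM => (hCS hM).2⟩,
      fun _ => subset_sUnion_of_mem⟩
  obtain ⟨hMS, hMd⟩ := hM.prop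
  refine ⟨M, hMS, fun hMc => ?_, hMd⟩
  -- if `M` were countable, some `y ∈ S \ M` would meet no `v x` with `x ∈ M`
  set bad := ⋃ x ∈ M, ⋃ e ∈ v x, {y ∈ S | e ∈ v y}
  have hbad : bad.Countable :=
    hMc.biUnion fun x hx => (hv x (hMS hx)).biUnion fun e he => hmult x (hMS hx) e he
  obtain ⟨y, hyS, hy⟩ := nonempty_iff_ne_empty.2 fun h =>
    hS ((hMc.union hbad).mono (sdiff_eq_empty.1 h))
  have hyM : (insert y M).PairwiseDisjoint v := hMd.insert fun x hx _ =>
    disjoint_left.2 fun e hey hex => hy (Or.inr (mem_biUnion hx (mem_biUnion hex ⟨hyS, hey⟩)))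
  exact hy (Or.inl (hM.2 ⟨insert_subset hyS hMS, hyM⟩ (subset_insert y M) (mem_insert y M)))

theorem exists_not_countable_const_or_countable_fibers [Fintype κ] {S : Set ι}
    (hS : ¬S.Countable) (G : ι → κ → α) :
    ∃ T ⊆ S, ¬T.Countable ∧
      ∀ i, (∃ a, ∀ y ∈ T, G y i = a) ∨ ∀ a, {y ∈ T | G y i = a}.Countable := by
  classical
  suffices ∀ s : Finset κ, ∃ T ⊆ S, ¬T.Countable ∧
      ∀ i ∈ s, (∃ a, ∀ y ∈ T, G y i = a) ∨ ∀ a, {y ∈ T | G y i = a}.Countable by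
    obtain ⟨T, hTS, hT, hG⟩ := this Finset.univ
    exact ⟨T, hTS, hT, fun i => hG i (Finset.mem_univ i)⟩
  intro s
  induction s using Finset.induction_on with
  | empty => exact ⟨S, subset_rfl, hS, by simp⟩
  | insert i s _ ih =>
    obtain ⟨T, hTS, hT, hG⟩ := ih
    by_cases hi : ∀ a, {y ∈ T | G y i = a}.Countable
    · exact ⟨T, hTS, hT, (Finset.forall_mem_insert _ _ _).2 ⟨Or.inr hi, hG⟩⟩
    obtain ⟨a, ha⟩ := not_forall.1 hi
    refine ⟨{y ∈ T | G y i = a}, fun y hy => hTS hy.1, ha,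
      (Finset.forall_mem_insert _ _ _).2 ⟨Or.inl ⟨a, fun y hy => hy.2⟩, fun j hj => ?_⟩⟩
    rcases hG j hj with ⟨b, hb⟩ | hb
    · exact Or.inl ⟨b, fun y hy => hb y hy.1⟩
    · exact Or.inr fun b => (hb b).mono fun y hy => by exact ⟨hy.1.1, hy.2⟩

theorem exists_not_countable_deltaSystem [Fintype κ] {S : Set ι} (hS : ¬S.Countable)
    (G : ι → κ → α) :
    ∃ T ⊆ S, ¬T.Countable ∧ ∃ C : Set κ,
      (∀ i ∈ C, ∃ a, ∀ y ∈ T, G y i = a) ∧ T.PairwiseDisjoint fun y => G y '' Cᶜ := by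
  obtain ⟨T, hTS, hT, hG⟩ := exists_not_countable_const_or_countable_fibers hS G
  set C := {i | ∃ a, ∀ y ∈ T, G y i = a}
  obtain ⟨T', hT'T, hT', hd⟩ := exists_not_countable_pairwiseDisjoint hT (fun y => G y '' Cᶜ)
    (fun y _ => (toFinite _).countable) fun y _ e _ => by
      refine ((toFinite Cᶜ).countable.biUnion fun i hi => (hG i).resolve_left hi e).mono ?_
      rintro z ⟨hz, i, hi, rfl⟩
      exact mem_biUnion hi ⟨hz, rfl⟩
  exact ⟨T', hT'T.trans hTS, hT', C, fun i ⟨a, ha⟩ => ⟨a, fun y hy => ha y (hT'T hy)⟩, hd⟩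

theorem exists_not_countable_strictMono_comp [LinearOrder α] {l : ℕ} {B : Set ι}
    (hB : ¬B.Countable) (b : ι → Fin l → α) :
    ∃ B' ⊆ B, ¬B'.Countable ∧ ∃ (l' : ℕ) (r : Fin l → Fin l') (b' : ι → Fin l' → α),
      ∀ y ∈ B', StrictMono (b' y) ∧ b y = b' y ∘ r ∧ range (b' y) = range (b y) := by
  classical
  -- fix the number of values of `b y` and the position of each `b y j` among them
  set s : ι → Finset α := fun y => Finset.univ.image (b y)
  have hmem (y : ι) (j : Fin l) : b y j ∈ s y := Finset.mem_image_of_mem _ (Finset.mem_univ j)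
  set pos : ι → Fin l → ℕ := fun y j => ((s y).orderIsoOfFin rfl).symm ⟨b y j, hmem y j⟩
  obtain ⟨⟨l', r⟩, hB'⟩ := exists_not_countable_fiber hB fun y => ((s y).card, pos y)
  obtain ⟨y₀, -, hy₀⟩ := Set.nonempty_of_not_countable hB'
  simp only [Prod.ext_iff] at hy₀
  refine ⟨_, sep_subset _ _, hB', l', fun j => ⟨r j, hy₀.1 ▸ congrFun hy₀.2 j ▸ Fin.is_lt _⟩,
    fun y => if h : (s y).card = l' then (s y).orderEmbOfFin h else (s y₀).orderEmbOfFin hy₀.1,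
    fun y ⟨_, hy⟩ => ?_⟩
  obtain ⟨hcard, hpos⟩ : (s y).card = l' ∧ pos y = r := Prod.ext_iff.1 hy
  simp only [dif_pos hcard]
  refine ⟨(Finset.orderEmbOfFin _ _).strictMono, funext fun j => ?_, by simp [s]⟩
  subst hcard hpos
  exact (congrArg Subtype.val (((s y).orderIsoOfFin rfl).apply_symm_apply ⟨b y j, hmem y j⟩)).symm

end Uncountable

theorem Fin.strictMono_snoc {n : ℕ} {α : Type*} [Preorder α] {f : Fin n → α} {x : α} :
    StrictMono (Fin.snoc f x : Fin (n + 1) → α) ↔ StrictMono f ∧ ∀ i, f i < x := by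
  rw [← Fin.insertNth_last', Fin.strictMono_insertNth_iff]
  simp [Fin.castSucc_lt_last, not_le_of_gt]

theorem exists_strictMono_forall_mem_gt {n : ℕ} {X : Fin n → Set Ordinal}
    (hXsub : ∀ i, X i ⊆ Iio omega1) (hXunc : ∀ i, ¬(X i).Countable) {γ : Ordinal}
    (hγ : γ < omega1) : ∃ t : Fin n → Ordinal, StrictMono t ∧ ∀ i, t i ∈ X i ∧ γ < t i := by
  induction n generalizing γ with
  | zero => exact ⟨Fin.elim0, fun i => i.elim0, fun i => i.elim0⟩
  | succ n ih =>
    obtain ⟨x, hxX, hγx⟩ := exists_mem_gt_of_not_countable (hXunc 0) hγ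
    obtain ⟨t, ht, htX⟩ := ih (fun i => hXsub i.succ) (fun i => hXunc i.succ) (hXsub 0 hxX)
    refine ⟨Fin.cons x t, Fin.strictMono_cons.2 ⟨fun i => (htX i).2, ht⟩, Fin.cases ?_ ?_⟩
    · exact ⟨hxX, hγx⟩
    · exact fun i => ⟨(htX i).1, hγx.trans (htX i).2⟩

theorem exists_not_countable_pairwiseDisjoint_snoc {m : ℕ} {S : Set (Iio omega1)}
    (hS : ¬S.Countable) (t : Iio omega1 → Fin (m + 1) → Ordinal)
    (ht : ∀ γ, StrictMono (t γ) ∧ ∀ i, γ.1 < t γ i ∧ t γ i < omega1)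
    (F : Iio omega1 → Ordinal) (hF : ∀ γ, F γ < omega1) :
    ∃ A ⊆ S, ¬A.Countable ∧ ∃ a : Iio omega1 → Fin (m + 2) → Ordinal,
      (∀ γ, StrictMono (a γ) ∧ ∀ j, a γ j < omega1) ∧ A.PairwiseDisjoint (fun γ => range (a γ)) ∧
      (∀ γ i, a γ i.castSucc = t γ i) ∧ ∀ γ, F γ < a γ (Fin.last _) := by
  set θ : Iio omega1 → Ordinal := fun γ => Order.succ (max (F γ) (t γ (Fin.last m)))
  have hθ (γ) : F γ < θ γ ∧ t γ (Fin.last m) < θ γ ∧ θ γ < omega1 :=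
    ⟨(le_max_left _ _).trans_lt (Order.lt_succ _), (le_max_right _ _).trans_lt (Order.lt_succ _),
      isSuccLimit_omega1.succ_lt (max_lt (hF γ) ((ht γ).2 _).2)⟩
  set a : Iio omega1 → Fin (m + 2) → Ordinal := fun γ => Fin.snoc (t γ) (θ γ)
  have ha (γ) (j) : γ.1 < a γ j ∧ a γ j < omega1 := by
    induction j using Fin.lastCases with
    | last => simpa [a] using ⟨((ht γ).2 _).1.trans (hθ γ).2.1, (hθ γ).2.2⟩
    | cast i => simpa [a] using (ht γ).2 i
  -- entries of `a γ` exceed `γ`, so each ordinal occurs in countably many of these tuples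
  obtain ⟨A, hAS, hA, hAd⟩ := exists_not_countable_pairwiseDisjoint hS (fun γ => range (a γ))
    (fun _ _ => countable_range _) fun γ _ _ ⟨i, hi⟩ =>
      (countable_setOf_val_le (hi ▸ (ha γ i).2)).mono fun γ' ⟨_, j, hj⟩ => (hj ▸ (ha γ' j).1).le
  refine ⟨A, hAS, hA, a, fun γ => ⟨Fin.strictMono_snoc.2 ⟨(ht γ).1, fun i =>
    ((ht γ).1.monotone (Fin.le_last i)).trans_lt (hθ γ).2.1⟩, fun j => (ha γ j).2⟩, hAd,
    fun γ i => by simp [a], fun γ => by simpa [a] using (hθ γ).1⟩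

theorem exists_not_countable_const_or_pairwiseDisjoint {n : ℕ}
    (G : Iio omega1 → Fin n → Ordinal) (hG : ∀ β i, G β i < omega1) :
    ∃ T : Set (Iio omega1), ¬T.Countable ∧ ∃ b : Iio omega1 → Fin (n + 1) → Ordinal,
      (∀ β j, b β j < omega1) ∧ T.PairwiseDisjoint (fun β => range (b β)) ∧
      (∀ β, b β (Fin.last n) = β.1) ∧
      ∀ i, (∀ β, b β i.castSucc = G β i) ∨ ∀ β ∈ T, ∀ β' ∈ T, G β i = G β' i := by
  classical
  set G' : Iio omega1 → Fin (n + 1) → Ordinal := fun β => Fin.snoc (G β) β.1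
  obtain ⟨T, -, hT, C, hC, hTd⟩ := exists_not_countable_deltaSystem not_countable_univ_Iio_omega1 G'
  have hCeq (j) (hj : j ∈ C) : ∀ β ∈ T, ∀ β' ∈ T, G' β j = G' β' j := by
    obtain ⟨v, hv⟩ := hC j hj
    exact fun β hβ β' hβ' => (hv β hβ).trans (hv β' hβ').symm
  have hlast : Fin.last n ∉ C := fun h => hT (Subsingleton.countable fun β hβ β' hβ' =>
    Subtype.ext (by simpa [G'] using hCeq _ h β hβ β' hβ'))
  -- the constant coordinates are replaced by `β`, which keeps the tuples disjoint
  refine ⟨T, hT, fun β j => if j ∈ C then β.1 else G' β j, fun β j => ?_,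
    hTd.mono fun β => ?_, fun β => by simp [G', hlast], fun i => ?_⟩
  · dsimp only
    split_ifs
    · exact β.2
    · induction j using Fin.lastCases <;> simp [G', hG, show β.1 < omega1 from β.2]
  · rintro _ ⟨j, rfl⟩
    by_cases hj : j ∈ C
    · exact ⟨_, hlast, by simp [G', hj]⟩
    · exact ⟨j, hj, by simp [hj]⟩
  · by_cases hi : i.castSucc ∈ C
    · exact Or.inr fun β hβ β' hβ' => by simpa [G'] using hCeq _ hi β hβ β' hβ'
    · exact Or.inl fun β => by simp [G', hi]

theorem Rrel.le {c : Ordinal → Ordinal → Fin 2} {α β : Ordinal} (h : Rrel c α β) : α ≤ β :=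
  h.elim le_of_eq fun h => h.1.le

theorem Rrel.color_eq_one {c : Ordinal → Ordinal → Fin 2} {α β : Ordinal} (h : Rrel c α β)
    (hne : α ≠ β) : c α β = 1 :=
  (h.resolve_left hne).2

namespace RealizesAllPatterns

variable {c : Ordinal → Ordinal → Fin 2} {ι κ : Type*} {k l : ℕ} {A : Set ι} {B : Set κ}
  {a : ι → Fin k → Ordinal} {b : κ → Fin l → Ordinal}

theorem exists_of_strictMono (hc : RealizesAllPatterns c) (hA : ¬A.Countable)
    (hB : ¬B.Countable) (ha : ∀ x ∈ A, StrictMono (a x) ∧ ∀ i, a x i < omega1)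
    (hb : ∀ y ∈ B, StrictMono (b y) ∧ ∀ j, b y j < omega1)
    (hAd : A.PairwiseDisjoint fun x => range (a x)) (hBd : B.PairwiseDisjoint fun y => range (b y))
    (χ : Fin k → Fin 2) (π : Fin k → Fin l) :
    ∃ x ∈ A, ∃ y ∈ B, (∀ i j, a x i < b y j) ∧ ∀ i, c (a x i) (b y (π i)) = χ i := by
  rcases Nat.eq_zero_or_pos k with rfl | hk
  · obtain ⟨x, hx⟩ := Set.nonempty_of_not_countable hA
    obtain ⟨y, hy⟩ := Set.nonempty_of_not_countable hB
    exact ⟨x, hx, y, hy, fun i => i.elim0, fun i => i.elim0⟩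
  have hl : 0 < l := Fin.pos (π ⟨0, hk⟩)
  have : Nonempty (Fin k) := ⟨⟨0, hk⟩⟩
  have : Nonempty (Fin l) := ⟨⟨0, hl⟩⟩
  obtain ⟨_, ⟨x, hx, rfl⟩, _, ⟨y, hy, rfl⟩, hlt, hχ⟩ := hc k l hk hl (a '' A) (b '' B)
    (forall_mem_image.2 ha) (forall_mem_image.2 hb)
    (forall_mem_image.2 fun x hx => forall_mem_image.2 fun x' hx' hne =>
      hAd.apply_ne_apply hx hx' fun h => hne (h ▸ rfl))
    (forall_mem_image.2 fun y hy => forall_mem_image.2 fun y' hy' hne =>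
      hBd.apply_ne_apply hy hy' fun h => hne (h ▸ rfl))
    (hAd.not_countable_image hA) (hBd.not_countable_image hB) χ π
  exact ⟨x, hx, y, hy, hlt, hχ⟩

theorem exists_of_pairwiseDisjoint (hc : RealizesAllPatterns c) (hA : ¬A.Countable)
    (hB : ¬B.Countable) (ha : ∀ x ∈ A, StrictMono (a x) ∧ ∀ i, a x i < omega1)
    (hb : ∀ y ∈ B, ∀ j, b y j < omega1)
    (hAd : A.PairwiseDisjoint fun x => range (a x)) (hBd : B.PairwiseDisjoint fun y => range (b y))
    (χ : Fin k → Fin 2) (π : Fin k → Fin l) :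
    ∃ x ∈ A, ∃ y ∈ B, (∀ i j, a x i < b y j) ∧ ∀ i, c (a x i) (b y (π i)) = χ i := by
  obtain ⟨B', hB'B, hB', l', r, b', hb'⟩ := exists_not_countable_strictMono_comp hB b
  have hb'_lt (y) (hy : y ∈ B') (j) : b' y j < omega1 := by
    obtain ⟨j', hj'⟩ := (hb' y hy).2.2 ▸ mem_range_self (f := b' y) j
    exact hj' ▸ hb y (hB'B hy) j'
  have hB'd : B'.PairwiseDisjoint fun y => range (b' y) := fun y hy y' hy' hne => by
    simp only [Function.onFun, (hb' y hy).2.2, (hb' y' hy').2.2]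
    exact hBd (hB'B hy) (hB'B hy') hne
  obtain ⟨x, hx, y, hy, hlt, hχ⟩ := hc.exists_of_strictMono hA hB' ha
    (fun y hy => ⟨(hb' y hy).1, hb'_lt y hy⟩) hAd hB'd χ (r ∘ π)
  refine ⟨x, hx, y, hB'B hy, ?_⟩
  rw [(hb' y hy).2.1]
  exact ⟨fun i j => hlt i (r j), hχ⟩

end RealizesAllPatterns

theorem RealizesAllPatterns.not_exists_tukey_map {c : Ordinal.{u} → Ordinal.{u} → Fin 2}
    (hc : RealizesAllPatterns c) {n : ℕ} (hn : 0 < n) {X : Fin n → Set Ordinal.{u}}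
    (hXsub : ∀ i, X i ⊆ Iio omega1) (hXunc : ∀ i, ¬(X i).Countable) :
    ¬ ∃ (f : (∀ i, X i) → ℕ × Iio omega1.{u}) (g : ℕ × Iio omega1.{u} → Fin n → Iio omega1.{u}),
        ∀ a p, ((f a).1 = p.1 ∧ (f a).2.1 ≤ p.2.1) → ∃ i, Rrel c (a i).1 (g p i).1 := by
  obtain ⟨m, rfl⟩ := Nat.exists_eq_add_one_of_ne_zero hn.ne'
  rintro ⟨f, g, H⟩
  choose! t ht_mono ht using fun γ : Iio omega1 =>
    exists_strictMono_forall_mem_gt hXsub hXunc γ.2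
  set a : Iio omega1 → ∀ i, X i := fun γ i => ⟨t γ i, (ht γ i).1⟩
  obtain ⟨n₀, hA₀⟩ :=
    exists_not_countable_fiber not_countable_univ_Iio_omega1 fun γ => (f (a γ)).1
  set G : Iio omega1 → Fin (m + 1) → Ordinal := fun β i => (g (n₀, β) i).1
  obtain ⟨T, hT, b, hb, hTd, hb_last, hbG⟩ :=
    exists_not_countable_const_or_pairwiseDisjoint G fun β i => (g (n₀, β) i).2
  obtain ⟨A, hAA₀, hA, â, hâ, hAd, hât, hâf⟩ := exists_not_countable_pairwiseDisjoint_snoc hA₀ t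
    (fun γ => ⟨ht_mono γ, fun i => ⟨(ht γ i).2, hXsub i (ht γ i).1⟩⟩)
    (fun γ => (f (a γ)).2.1) fun γ => (f (a γ)).2.2
  obtain ⟨β₀, hβ₀⟩ := Set.nonempty_of_not_countable hT
  -- taking `γ` above every `G β₀ i` puts `a γ` above the constant coordinates of all `G β`
  obtain ⟨γ, ⟨hγA, hγβ₀⟩, β, hβ, hlt, hcol⟩ := hc.exists_of_pairwiseDisjoint
    (not_countable_sep_forall_lt hA fun i => (g (n₀, β₀) i).2) hT (fun γ _ => hâ γ)
    (fun β _ => hb β) (hAd.subset (sep_subset _ _)) hTd 0 id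
  obtain ⟨i, hi⟩ := H (a γ) (n₀, β) ⟨(hAA₀ hγA).2, ((hâf γ).trans (hb_last β ▸ hlt _ _)).le⟩
  change Rrel c (t γ i) (G β i) at hi
  rcases hbG i with hbi | hconst
  · have hlt' : t γ i < G β i := by simpa [hât, hbi] using hlt i.castSucc i.castSucc
    have hcol' : c (t γ i) (G β i) = 0 := by simpa [hât, hbi] using hcol i.castSucc
    exact absurd (hi.color_eq_one hlt'.ne) (by simp [hcol'])
  · exact ((hi.le.trans_eq (hconst β hβ β₀ hβ₀)).trans_lt ((hγβ₀ i).trans (ht γ i).2)).false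

theorem statement14_general (c : Ordinal → Ordinal → Fin 2) (hc : RealizesAllPatterns c)
    (n : ℕ) (hn : 0 < n) (X : Fin n → Set Ordinal)
    (hXsub : ∀ i, X i ⊆ Set.Iio omega1)
    (hXunc : ∀ i, ¬ (X i).Countable) :
    ¬ ∃ (f : (∀ i : Fin n, X i) → ℕ × {o : Ordinal // o < omega1})
        (g : ℕ × {o : Ordinal // o < omega1} → (Fin n → {o : Ordinal // o < omega1})),
        ∀ (a : ∀ i : Fin n, X i) (p : ℕ × {o : Ordinal // o < omega1}),
          ((f a).1 = p.1 ∧ (f a).2.val ≤ p.2.val) →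
          ∃ i : Fin n, Rrel c (a i).val ((g p) i).val := by
  rintro ⟨f, g, H⟩
  -- the ordinals in the codomain of `f` may live in another universe than those of `X` and `g`
  refine hc.not_exists_tukey_map hn hXsub hXunc ⟨fun a => ((f a).1, omega1OrderIso.symm (f a).2),
    fun p => g (p.1, omega1OrderIso p.2), fun a p hp => H a _ ⟨hp.1, ?_⟩⟩
  exact omega1OrderIso.symm_apply_le.1 hp.2

/-- **Theorem (Moore).** If `c` realizes all patterns, then for every nonempty
finite family `F = (X i)_{i < n}` of pairwise disjoint uncountable subsets of
`ω₁`, the meet `⋀_{i} R_{X i}` (with domain `∏ i, X i`, range `∏ i, ω₁`, where a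
tuple `a` is related to a tuple `y` iff `a i R y i` for at least one `i`) is not
Tukey reducible to `ℵ₀·ω₁`. -/
theorem statement14 (c : Ordinal → Ordinal → Fin 2) (hc : RealizesAllPatterns c)
    (n : ℕ) (hn : 0 < n) (X : Fin n → Set Ordinal)
    (hXsub : ∀ i, X i ⊆ Set.Iio omega1)
    (hXunc : ∀ i, ¬ (X i).Countable)
    (hXdis : ∀ i j, i ≠ j → Disjoint (X i) (X j)) :
    ¬ ∃ (f : (∀ i : Fin n, X i) → ℕ × {o : Ordinal // o < omega1})
        (g : ℕ × {o : Ordinal // o < omega1} → (Fin n → {o : Ordinal // o < omega1})),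
        ∀ (a : ∀ i : Fin n, X i) (p : ℕ × {o : Ordinal // o < omega1}),
          ((f a).1 = p.1 ∧ (f a).2.val ≤ p.2.val) →
          ∃ i : Fin n, Rrel c (a i).val ((g p) i).val :=
  statement14_general c hc n hn X hXsub hXunc
end

section
/- If X is a set and ℱ is a point-countable, point-separating family of subsets of X, then the topology on X generated by declaring every member of ℱ to be clopen (i.e., the topology with subbasis ℱ ∪ {X \ F : F ∈ ℱ}) is countably tight, and every countable subspace of it is metrizable. In particular, this topology is Fréchet–Urysohn. -/
open TopologicalSpace

/-- **Theorem (Moore, after Balogh).** If `X` is a set and `ℱ` is a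
point-countable, point-separating family of subsets of `X`, then the topology on
`X` generated by declaring every member of `ℱ` clopen (i.e. generated by the
subbasis `ℱ ∪ {X \ F : F ∈ ℱ}`) is countably tight and all of its countable
subspaces are metrizable.  In particular it is Fréchet–Urysohn. -/
theorem statement16 (X : Type) (F : Set (Set X))
    -- point-countable:
    (hpc : ∀ x : X, {A | A ∈ F ∧ x ∈ A}.Countable)
    -- point-separating:
    (hps : ∀ x y : X, x ≠ y → ∃ A ∈ F, (x ∈ A ∧ y ∉ A) ∨ (y ∈ A ∧ x ∉ A)) :
    letI : TopologicalSpace X := TopologicalSpace.generateFrom (F ∪ (compl '' F))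
    -- countably tight:
    (∀ (A : Set X) (x : X), x ∈ closure A →
        ∃ B ⊆ A, B.Countable ∧ x ∈ closure B) ∧
    -- every countable subspace is metrizable:
    (∀ S : Set X, S.Countable → TopologicalSpace.MetrizableSpace S) ∧
    -- Fréchet–Urysohn:
    FrechetUrysohnSpace X := by
  classical
  letI t : TopologicalSpace X := TopologicalSpace.generateFrom (F ∪ (compl '' F))
  have hbasis : IsTopologicalBasis
      ((fun f => Set.sInter f) '' { f : Set (Set X) | f.Finite ∧ f ⊆ (F ∪ compl '' F) }) :=
    isTopologicalBasis_of_subbasis rfl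
  -- countable tightness
  have tight : ∀ (A : Set X) (x : X), x ∈ closure A →
      ∃ B ⊆ A, B.Countable ∧ x ∈ closure B := by
    intro A x hx
    set N : Finset (Set X) → Set X := fun T => ⋂ C ∈ T, (if x ∈ C then C else Cᶜ) with hN
    have hxN : ∀ T, x ∈ N T := by
      intro T
      simp only [hN, Set.mem_iInter]
      intro C _
      split <;> simp_all
    have hNbasis : ∀ T : Finset (Set X), ↑T ⊆ F →
        N T ∈ (fun f => Set.sInter f) '' { f : Set (Set X) | f.Finite ∧ f ⊆ (F ∪ compl '' F) } := by
      intro T hT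
      refine ⟨(fun C => if x ∈ C then C else Cᶜ) '' ↑T, ⟨T.finite_toSet.image _, ?_⟩, ?_⟩
      · rintro _ ⟨C, hC, rfl⟩
        show (if x ∈ C then C else Cᶜ) ∈ F ∪ compl '' F
        by_cases h : x ∈ C
        · rw [if_pos h]; exact Or.inl (hT hC)
        · rw [if_neg h]; exact Or.inr ⟨C, hT hC, rfl⟩
      · show ⋂₀ ((fun C => if x ∈ C then C else Cᶜ) '' ↑T) = N T
        rw [Set.sInter_image, hN]
        simp
    have key : ∀ T : Finset (Set X), ↑T ⊆ F → ∃ a, a ∈ A ∧ a ∈ N T := by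
      intro T hT
      obtain ⟨a, ha1, ha2⟩ := (hbasis.mem_closure_iff).1 hx (N T) (hNbasis T hT) (hxN T)
      exact ⟨a, ha2, ha1⟩
    haveI : Nonempty X := ⟨x⟩
    choose! pick hpickA hpickN using key
    set R : Set X → Set (Set X) := fun B => {C | C ∈ F ∧ (x ∈ C ∨ ∃ b ∈ B, b ∈ C)} with hR
    have hRF : ∀ B, R B ⊆ F := fun B C hC => hC.1
    have hRmono : ∀ B B' : Set X, B ⊆ B' → R B ⊆ R B' := by
      rintro B B' hBB C ⟨h1, h2⟩
      refine ⟨h1, ?_⟩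
      rcases h2 with h | ⟨b, hb, hbC⟩
      · exact Or.inl h
      · exact Or.inr ⟨b, hBB hb, hbC⟩
    have hRc : ∀ B : Set X, B.Countable → (R B).Countable := by
      intro B hB
      have hsub : R B ⊆ {C | C ∈ F ∧ x ∈ C} ∪ ⋃ b ∈ B, {C | C ∈ F ∧ b ∈ C} := by
        rintro C ⟨h1, h2⟩
        rcases h2 with h | ⟨b, hb, hbC⟩
        · exact Or.inl ⟨h1, h⟩
        · exact Or.inr (Set.mem_biUnion hb ⟨h1, hbC⟩)
      exact ((hpc x).union (hB.biUnion fun b _ => hpc b)).mono hsub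
    have finsetCount : ∀ s : Set (Set X), s.Countable →
        {T : Finset (Set X) | ↑T ⊆ s}.Countable := by
      intro s hs
      have h1 := Set.countable_setOf_finite_subset hs
      have h2 : {T : Finset (Set X) | ↑T ⊆ s} ⊆
          (fun T : Finset (Set X) => (↑T : Set (Set X))) ⁻¹' {u | u.Finite ∧ u ⊆ s} :=
        fun T hT => ⟨T.finite_toSet, hT⟩
      exact (h1.preimage Finset.coe_injective).mono h2
    let D : ℕ → Set X := fun n =>
      Nat.rec (∅ : Set X) (fun _ Dn => Dn ∪ pick '' {T : Finset (Set X) | ↑T ⊆ R Dn}) n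
    have hDs : ∀ n, D (n + 1) = D n ∪ pick '' {T : Finset (Set X) | ↑T ⊆ R (D n)} :=
      fun n => rfl
    have hDc : ∀ n, (D n).Countable ∧ D n ⊆ A := by
      intro n
      induction n with
      | zero => exact ⟨Set.countable_empty, Set.empty_subset _⟩
      | succ n ih =>
        rw [hDs]
        constructor
        · exact ih.1.union ((finsetCount _ (hRc _ ih.1)).image _)
        · rintro a (ha | ⟨T, hT, rfl⟩)
          · exact ih.2 ha
          · exact hpickA T (Set.Subset.trans hT (hRF _))
    have hDmono : Monotone D := by
      apply monotone_nat_of_le_succ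
      intro n
      rw [hDs]
      exact Set.subset_union_left
    refine ⟨⋃ n, D n, Set.iUnion_subset fun n => (hDc n).2,
      Set.countable_iUnion fun n => (hDc n).1, ?_⟩
    rw [hbasis.mem_closure_iff]
    rintro o ⟨f, ⟨hf_fin, hf_sub⟩, rfl⟩ hxo
    have hrep : ∀ u ∈ f, ∃ C, C ∈ F ∧ (u = C ∨ u = Cᶜ) := by
      intro u hu
      rcases hf_sub hu with h | ⟨C, hC, rfl⟩
      · exact ⟨u, h, Or.inl rfl⟩
      · exact ⟨C, hC, Or.inr rfl⟩
    choose! rep hrepF hrepEq using hrep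
    set T0 : Finset (Set X) := hf_fin.toFinset.image rep with hT0
    have hT0F : (↑T0 : Set (Set X)) ⊆ F := by
      intro C hC
      simp only [hT0, Finset.coe_image, Set.mem_image, Finset.mem_coe,
        Set.Finite.mem_toFinset] at hC
      obtain ⟨u, hu, rfl⟩ := by
        simpa [Set.Finite.coe_toFinset] using hC
      exact hrepF u hu
    have hNT0 : N T0 ⊆ ⋂₀ f := by
      intro y hy
      intro u hu
      have hmem : rep u ∈ T0 := by
        simp only [hT0, Finset.mem_image, Set.Finite.mem_toFinset]
        exact ⟨u, hu, rfl⟩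
      have hy' : y ∈ (if x ∈ rep u then rep u else (rep u)ᶜ) := by
        simp only [hN, Set.mem_iInter] at hy
        exact hy (rep u) hmem
      have hxu : x ∈ u := hxo u hu
      rcases hrepEq u hu with h | h
      · rw [h] at hxu ⊢
        rwa [if_pos hxu] at hy'
      · have : x ∉ rep u := by rw [h] at hxu; exact hxu
        rw [h]
        rwa [if_neg this] at hy'
    set B : Set X := ⋃ n, D n with hB
    set T1 : Finset (Set X) := T0.filter (fun C => x ∈ C ∨ (C ∩ B).Nonempty) with hT1
    have hT1F : (↑T1 : Set (Set X)) ⊆ F := fun C hC => hT0F (Finset.filter_subset _ _ hC)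
    have hex : ∀ C ∈ T1, ∃ n, C ∈ R (D n) := by
      intro C hC
      have hC' := Finset.mem_filter.1 hC
      rcases hC'.2 with h | ⟨b, hbC, hbB⟩
      · exact ⟨0, hT0F hC'.1, Or.inl h⟩
      · obtain ⟨m, hm⟩ := Set.mem_iUnion.1 hbB
        exact ⟨m, hT0F hC'.1, Or.inr ⟨b, hm, hbC⟩⟩
    choose! m hm using hex
    obtain ⟨n, hn⟩ : ∃ n, ∀ C ∈ T1, m C ≤ n := ⟨T1.sup m, fun C hC => Finset.le_sup hC⟩
    have hT1R : (↑T1 : Set (Set X)) ⊆ R (D n) :=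
      fun C hC => hRmono _ _ (hDmono (hn C hC)) (hm C hC)
    have haB : pick T1 ∈ B := by
      refine Set.mem_iUnion.2 ⟨n + 1, ?_⟩
      rw [hDs]
      exact Or.inr ⟨T1, hT1R, rfl⟩
    have haN1 : pick T1 ∈ N T1 := hpickN T1 hT1F
    have haN0 : pick T1 ∈ N T0 := by
      simp only [hN, Set.mem_iInter]
      intro C hC
      by_cases h : C ∈ T1
      · simp only [hN, Set.mem_iInter] at haN1
        exact haN1 C h
      · have h' : ¬(x ∈ C ∨ (C ∩ B).Nonempty) := by
          intro hcon
          exact h (Finset.mem_filter.2 ⟨hC, hcon⟩)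
        push_neg at h'
        rw [if_neg h'.1]
        intro hcon
        have hmem : pick T1 ∈ C ∩ B := ⟨hcon, haB⟩
        rw [h'.2] at hmem
        exact hmem
    exact ⟨pick T1, hNT0 haN0, haB⟩
  -- clopen-ness of generators
  have hclopen : ∀ C ∈ F, IsClopen C := by
    intro C hC
    constructor
    · rw [← isOpen_compl_iff]
      exact isOpen_generateFrom_of_mem (Or.inr ⟨C, hC, rfl⟩)
    · exact isOpen_generateFrom_of_mem (Or.inl hC)
  have hclopen' : ∀ u ∈ F ∪ compl '' F, IsClopen u := by
    rintro u (h | ⟨C, hC, rfl⟩)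
    · exact hclopen u h
    · exact (hclopen C hC).compl
  haveI hT2 : T2Space X := by
    constructor
    intro x y hxy
    obtain ⟨C, hCF, hsep⟩ := hps x y hxy
    rcases hsep with ⟨hx, hy⟩ | ⟨hy, hx⟩
    · exact ⟨C, Cᶜ, (hclopen C hCF).isOpen, (hclopen C hCF).compl.isOpen, hx, hy,
        disjoint_compl_right⟩
    · exact ⟨Cᶜ, C, (hclopen C hCF).compl.isOpen, (hclopen C hCF).isOpen, hx, hy,
        disjoint_compl_left⟩
  haveI hreg : RegularSpace X := by
    apply RegularSpace.of_exists_mem_nhds_isClosed_subset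
    intro x s hs
    obtain ⟨o, ⟨f, ⟨hf_fin, hf_sub⟩, rfl⟩, hxo, hos⟩ := hbasis.mem_nhds_iff.1 hs
    refine ⟨⋂₀ f, ?_, ?_, hos⟩
    · exact (hbasis.isOpen ⟨f, ⟨hf_fin, hf_sub⟩, rfl⟩).mem_nhds hxo
    · exact isClosed_sInter fun u hu => (hclopen' u (hf_sub hu)).isClosed
  haveI hT3 : T3Space X := { toT0Space := inferInstance, toRegularSpace := hreg }
  have metr : ∀ S : Set X, S.Countable → TopologicalSpace.MetrizableSpace S := by
    intro S hS
    have hsubb : ((fun u => (Subtype.val : S → X) ⁻¹' u) '' (F ∪ compl '' F)).Countable := by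
      have h1 : ((fun u => (Subtype.val : S → X) ⁻¹' u) '' F).Countable := by
        have hsub : ((fun u => (Subtype.val : S → X) ⁻¹' u) '' F) ⊆
            insert (∅ : Set S)
              ((fun u => (Subtype.val : S → X) ⁻¹' u) '' (⋃ y ∈ S, {C | C ∈ F ∧ y ∈ C})) := by
          rintro _ ⟨C, hC, rfl⟩
          by_cases h : ∃ y : S, (y : X) ∈ C
          · obtain ⟨y, hy⟩ := h
            exact Set.mem_insert_iff.2 (Or.inr ⟨C, Set.mem_biUnion y.2 ⟨hC, hy⟩, rfl⟩)
          · push_neg at h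
            refine Set.mem_insert_iff.2 (Or.inl ?_)
            ext y
            simp [h y]
        exact (((hS.biUnion fun y _ => hpc y).image _).insert ∅).mono hsub
      have h2 : ((fun u => (Subtype.val : S → X) ⁻¹' u) '' (compl '' F)) =
          compl '' ((fun u => (Subtype.val : S → X) ⁻¹' u) '' F) := by
        rw [← Set.image_comp, ← Set.image_comp]
        apply Set.image_congr
        intro C _
        simp [Set.preimage_compl]
      rw [Set.image_union, h2]
      exact h1.union (h1.image _)
    have hindS : (instTopologicalSpaceSubtype : TopologicalSpace S) =
        TopologicalSpace.generateFrom
          ((fun u => (Subtype.val : S → X) ⁻¹' u) '' (F ∪ compl '' F)) := by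
      rw [instTopologicalSpaceSubtype, induced_generateFrom_eq]
    have hbasisS := isTopologicalBasis_of_subbasis hindS
    haveI : SecondCountableTopology S :=
      hbasisS.secondCountableTopology
        ((Set.countable_setOf_finite_subset hsubb).image _)
    exact TopologicalSpace.metrizableSpace_of_t3_secondCountable S
  refine ⟨tight, metr, ?_⟩
  constructor
  intro A x hx
  obtain ⟨B, hBA, hBc, hxB⟩ := tight A x hx
  set S : Set X := insert x B with hS
  haveI := metr S (hBc.insert x)
  have hxS : (⟨x, Set.mem_insert _ _⟩ : S) ∈ closure ((Subtype.val : S → X) ⁻¹' B) := by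
    rw [closure_subtype]
    have : (Subtype.val : S → X) '' ((Subtype.val : S → X) ⁻¹' B) = B := by
      rw [Subtype.image_preimage_coe]
      exact Set.inter_eq_right.2 (Set.subset_insert x B)
    rw [this]
    exact hxB
  obtain ⟨u, hu, hconv⟩ := mem_closure_iff_seq_limit.1 hxS
  refine ⟨fun n => (u n : X), fun n => hBA (hu n), ?_⟩
  have := (continuous_subtype_val.tendsto _).comp hconv
  exact this
end
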